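/- arXiv:1103.4305 — 3 statements merged into one kernel-verified Lean document; each statement's English description precedes it below -/
import Mathlib

section
/- Let φ: M → N be a Poisson map between oriented Poisson manifolds and fix volume forms μ on M and ν on N. Then the modular class mod(φ) ∈ H¹_π(φ) is represented by the vector field along φ given by X_{μ,ν} = dφ · X_μ − X_ν ∘ φ, where X_μ and X_ν are the modular vector fields of π_M and π_N relative to μ and ν. -/
open scoped Manifold
local notation "∞" => (⊤ : ℕ∞)

noncomputable section

namespace PoissonPaper

variable {EM : Type*} [NormedAddCommGroup EM] [NormedSpace ℝ EM]
  {HM : Type*} [TopologicalSpace HM] {IM : ModelWithCorners ℝ EM HM}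
  {M : Type*} [TopologicalSpace M] [ChartedSpace HM M]
  {EN : Type*} [NormedAddCommGroup EN] [NormedSpace ℝ EN]
  {HN : Type*} [TopologicalSpace HN] {IN : ModelWithCorners ℝ EN HN}
  {N : Type*} [TopologicalSpace N] [ChartedSpace HN N]

/-- A Poisson structure on a manifold, given by a Poisson bracket on the commutative
ring of smooth real-valued functions: an ℝ-bilinear, antisymmetric bracket satisfying
the Leibniz rule and the Jacobi identity. -/
structure PoissonStructure
    {E : Type*} [NormedAddCommGroup E] [NormedSpace ℝ E]
    {H : Type*} [TopologicalSpace H] (I : ModelWithCorners ℝ E H)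
    (M : Type*) [TopologicalSpace M] [ChartedSpace H M] : Type _ where
  bracket : C^∞⟮I, M; ℝ⟯ → C^∞⟮I, M; ℝ⟯ → C^∞⟮I, M; ℝ⟯
  bracket_add_left : ∀ f g h, bracket (f + g) h = bracket f h + bracket g h
  bracket_smul_left : ∀ (r : ℝ) f g, bracket (r • f) g = r • bracket f g
  bracket_antisymm : ∀ f g, bracket f g = - bracket g f
  bracket_leibniz : ∀ f g h, bracket f (g * h) = bracket f g * h + g * bracket f h
  bracket_jacobi : ∀ f g h,
    bracket f (bracket g h) + bracket g (bracket h f) + bracket h (bracket f g) = 0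

namespace PoissonStructure

lemma bracket_zero_left (P : PoissonStructure IM M) (f : C^∞⟮IM, M; ℝ⟯) :
    P.bracket 0 f = 0 := by
  have h := P.bracket_smul_left 0 0 f
  simpa using h

lemma bracket_add_right (P : PoissonStructure IM M) (f g h : C^∞⟮IM, M; ℝ⟯) :
    P.bracket f (g + h) = P.bracket f g + P.bracket f h := by
  rw [P.bracket_antisymm f (g + h), P.bracket_add_left,
    P.bracket_antisymm g f, P.bracket_antisymm h f]
  abel

lemma bracket_smul_right (P : PoissonStructure IM M) (r : ℝ) (f g : C^∞⟮IM, M; ℝ⟯) :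
    P.bracket f (r • g) = r • P.bracket f g := by
  rw [P.bracket_antisymm f (r • g), P.bracket_smul_left, P.bracket_antisymm g f]
  simp

lemma bracket_zero_right (P : PoissonStructure IM M) (f : C^∞⟮IM, M; ℝ⟯) :
    P.bracket f 0 = 0 := by
  rw [P.bracket_antisymm, bracket_zero_left]; simp

end PoissonStructure

variable (IM M) in
/-- A vector field, regarded as an ℝ-linear derivation of the ring of smooth functions. -/
def IsVectorField (X : C^∞⟮IM, M; ℝ⟯ → C^∞⟮IM, M; ℝ⟯) : Prop :=
  (∀ f g, X (f + g) = X f + X g) ∧ (∀ (r : ℝ) f, X (r • f) = r • X f) ∧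
    (∀ f g, X (f * g) = X f * g + f * X g)

variable (IM M) in
/-- The commutator (Lie bracket) of two vector fields. -/
def comm (X Y : C^∞⟮IM, M; ℝ⟯ → C^∞⟮IM, M; ℝ⟯) : C^∞⟮IM, M; ℝ⟯ → C^∞⟮IM, M; ℝ⟯ :=
  fun f => X (Y f) - Y (X f)

/-- The hamiltonian vector field `X_h = {h, ·}` of a smooth function `h`. -/
def PoissonStructure.ham (P : PoissonStructure IM M) (h : C^∞⟮IM, M; ℝ⟯) :
    C^∞⟮IM, M; ℝ⟯ → C^∞⟮IM, M; ℝ⟯ := P.bracket h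

/-- A vector field is Poisson when it is an infinitesimal automorphism of the bracket;
equivalently, when it is a closed 1-cochain for the Lichnerowicz differential. -/
def IsPoissonVF (P : PoissonStructure IM M) (X : C^∞⟮IM, M; ℝ⟯ → C^∞⟮IM, M; ℝ⟯) : Prop :=
  ∀ f g, X (P.bracket f g) = P.bracket (X f) g + P.bracket f (X g)

/-- A volume form on a manifold, encoded through its divergence operator on vector fields:
`div X` is characterized by `L_X μ = (div X) μ`.  The axioms are the standard properties of
the divergence operator of a volume form. -/
structure VolumeForm
    {E : Type*} [NormedAddCommGroup E] [NormedSpace ℝ E]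
    {H : Type*} [TopologicalSpace H] (I : ModelWithCorners ℝ E H)
    (M : Type*) [TopologicalSpace M] [ChartedSpace H M] : Type _ where
  div : (C^∞⟮I, M; ℝ⟯ → C^∞⟮I, M; ℝ⟯) → C^∞⟮I, M; ℝ⟯
  div_add : ∀ X Y, IsVectorField I M X → IsVectorField I M Y → div (X + Y) = div X + div Y
  div_fsmul : ∀ (f : C^∞⟮I, M; ℝ⟯) X, IsVectorField I M X → div (f • X) = f * div X + X f
  div_comm : ∀ X Y, IsVectorField I M X → IsVectorField I M Y →
    div (comm I M X Y) = X (div Y) - Y (div X)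

/-- The modular vector field of a Poisson structure relative to a volume form:
`X_μ(f) = div_μ(X_f)`, i.e. it is characterized by `L_{X_f} μ = X_μ(f) • μ`. -/
def PoissonStructure.modularVF (P : PoissonStructure IM M) (V : VolumeForm IM M) :
    C^∞⟮IM, M; ℝ⟯ → C^∞⟮IM, M; ℝ⟯ :=
  fun f => V.div (P.ham f)

/-- The pullback of smooth functions along a smooth map. -/
def pullback (φ : C^∞⟮IM, M; IN, N⟯) : C^∞⟮IN, N; ℝ⟯ → C^∞⟮IM, M; ℝ⟯ :=
  fun f => f.comp φ

/-- A smooth map between Poisson manifolds is a Poisson map if its pullback on smooth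
functions preserves the Poisson brackets. -/
def IsPoissonMap (PM : PoissonStructure IM M) (PN : PoissonStructure IN N)
    (φ : C^∞⟮IM, M; IN, N⟯) : Prop :=
  ∀ f g, pullback φ (PN.bracket f g) = PM.bracket (pullback φ f) (pullback φ g)

/-- Degree-one cochains of the Lie algebroid `φ*T*N` associated to a Poisson map
`φ : M → N`: these are the vector fields along `φ`, encoded as operators from smooth
functions on `N` to smooth functions on `M`. -/
abbrev Cochain
    {E : Type*} [NormedAddCommGroup E] [NormedSpace ℝ E]
    {H : Type*} [TopologicalSpace H] (I : ModelWithCorners ℝ E H)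
    (M : Type*) [TopologicalSpace M] [ChartedSpace H M]
    {E' : Type*} [NormedAddCommGroup E'] [NormedSpace ℝ E']
    {H' : Type*} [TopologicalSpace H'] (I' : ModelWithCorners ℝ E' H')
    (N : Type*) [TopologicalSpace N] [ChartedSpace H' N] : Type _ :=
  C^∞⟮I', N; ℝ⟯ → C^∞⟮I, M; ℝ⟯

/-- The exact 1-cochains of the Lie algebroid `φ*T*N`: those of the form
`g ↦ {g∘φ, h}_M` (i.e. `dφ·X_{-h}` for a smooth function `h` on `M`). -/
def exactSubmodule (PM : PoissonStructure IM M) (φ : C^∞⟮IM, M; IN, N⟯) :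
    Submodule ℝ (Cochain IM M IN N) where
  carrier := {Y | ∃ h, ∀ g, Y g = PM.bracket (pullback φ g) h}
  add_mem' := by
    rintro Y₁ Y₂ ⟨h₁, H₁⟩ ⟨h₂, H₂⟩
    exact ⟨h₁ + h₂, fun g => by
      simp [Pi.add_apply, H₁ g, H₂ g, PM.bracket_add_right]⟩
  zero_mem' := ⟨0, fun g => by simp [PM.bracket_zero_right]⟩
  smul_mem' := by
    rintro r Y ⟨h, H⟩
    exact ⟨r • h, fun g => by simp [Pi.smul_apply, H g, PM.bracket_smul_right]⟩

/-- The degree-one Lie algebroid cohomology of `φ*T*N`, presented as the space of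
1-cochains modulo the exact ones (so that equalities between classes of closed
cochains are exactly equalities in `H¹_π(φ)`). -/
abbrev H1 (PM : PoissonStructure IM M) (φ : C^∞⟮IM, M; IN, N⟯) : Type _ :=
  Cochain IM M IN N ⧸ exactSubmodule PM φ

/-- The cohomology class of a 1-cochain. -/
def cls (PM : PoissonStructure IM M) (φ : C^∞⟮IM, M; IN, N⟯) (Y : Cochain IM M IN N) :
    H1 PM φ :=
  Submodule.Quotient.mk Y

/-- A 1-cochain of `φ*T*N` is closed when
`{f∘φ, Y g}_M - {g∘φ, Y f}_M - Y({f,g}_N) = 0` for all smooth `f, g` on `N`. -/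
def IsClosedCochain (PM : PoissonStructure IM M) (PN : PoissonStructure IN N)
    (φ : C^∞⟮IM, M; IN, N⟯) (Y : Cochain IM M IN N) : Prop :=
  ∀ f g, PM.bracket (pullback φ f) (Y g) - PM.bracket (pullback φ g) (Y f)
      - Y (PN.bracket f g) = 0

/-- `dφ · X` : the pushforward of a vector field on `M` to a vector field along `φ`. -/
def pushSrc (φ : C^∞⟮IM, M; IN, N⟯) (X : C^∞⟮IM, M; ℝ⟯ → C^∞⟮IM, M; ℝ⟯) :
    Cochain IM M IN N :=
  fun g => X (pullback φ g)

/-- `Y ∘ φ` : the restriction along `φ` of a vector field on `N` to a vector field along `φ`. -/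
def pushTgt (φ : C^∞⟮IM, M; IN, N⟯) (Y : C^∞⟮IN, N; ℝ⟯ → C^∞⟮IN, N; ℝ⟯) :
    Cochain IM M IN N :=
  fun g => pullback φ (Y g)

/-- The modular vector field `X_{μ,ν} = dφ·X_μ - X_ν∘φ` of a Poisson map `φ` relative to
volume forms `μ` on the source and `ν` on the target. -/
def modularCochain (PM : PoissonStructure IM M) (PN : PoissonStructure IN N)
    (φ : C^∞⟮IM, M; IN, N⟯) (Vμ : VolumeForm IM M) (Vν : VolumeForm IN N) :
    Cochain IM M IN N :=
  pushSrc φ (PM.modularVF Vμ) - pushTgt φ (PN.modularVF Vν)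

/-- The exact vector fields on a Poisson manifold: the hamiltonian vector fields,
in the form `g ↦ {g, h}` (the coboundaries of the Lichnerowicz complex in degree one). -/
def exactVF (P : PoissonStructure IM M) : Submodule ℝ (C^∞⟮IM, M; ℝ⟯ → C^∞⟮IM, M; ℝ⟯) where
  carrier := {Y | ∃ h, ∀ g, Y g = P.bracket g h}
  add_mem' := by
    rintro Y₁ Y₂ ⟨h₁, H₁⟩ ⟨h₂, H₂⟩
    exact ⟨h₁ + h₂, fun g => by
      simp [Pi.add_apply, H₁ g, H₂ g, P.bracket_add_right]⟩
  zero_mem' := ⟨0, fun g => by simp [P.bracket_zero_right]⟩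
  smul_mem' := by
    rintro r Y ⟨h, H⟩
    exact ⟨r • h, fun g => by simp [Pi.smul_apply, H g, P.bracket_smul_right]⟩

/-- The first Poisson cohomology of a Poisson manifold, presented as vector fields
modulo hamiltonian vector fields. -/
abbrev H1VF (P : PoissonStructure IM M) : Type _ :=
  (C^∞⟮IM, M; ℝ⟯ → C^∞⟮IM, M; ℝ⟯) ⧸ exactVF P

/-- The Poisson cohomology class of a vector field on a Poisson manifold. -/
def clsVF (P : PoissonStructure IM M) (X : C^∞⟮IM, M; ℝ⟯ → C^∞⟮IM, M; ℝ⟯) : H1VF P :=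
  Submodule.Quotient.mk X

/-! The modular vector field `X_μ = div_μ ∘ ham` is a Poisson vector field: Jacobi says that
`f ↦ X_f` turns brackets into commutators, and the divergence turns commutators into the
expression `X_f (div X_g) - X_g (div X_f)`, which is exactly the derivation property of `X_μ`.
Since `φ` is a Poisson map, `dφ · X` and `Y ∘ φ` are closed cochains of `φ*T*N` whenever `X` and
`Y` are Poisson vector fields, so `X_{μ,ν}` is closed; its class is `i*[X_μ] - j*[X_ν]` because
taking classes is linear. -/

namespace PoissonStructure

variable (P : PoissonStructure IM M)

lemma bracket_neg_right (f g : C^∞⟮IM, M; ℝ⟯) : P.bracket f (-g) = -P.bracket f g := by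
  rw [← neg_one_smul ℝ g, P.bracket_smul_right, neg_one_smul]

lemma bracket_sub_right (f g h : C^∞⟮IM, M; ℝ⟯) :
    P.bracket f (g - h) = P.bracket f g - P.bracket f h := by
  rw [sub_eq_add_neg, P.bracket_add_right, P.bracket_neg_right, ← sub_eq_add_neg]

lemma isVectorField_ham (h : C^∞⟮IM, M; ℝ⟯) : IsVectorField IM M (P.ham h) :=
  ⟨P.bracket_add_right h, fun r f => P.bracket_smul_right r h f, P.bracket_leibniz h⟩

lemma comm_ham (f g : C^∞⟮IM, M; ℝ⟯) :
    comm IM M (P.ham f) (P.ham g) = P.ham (P.bracket f g) := by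
  funext h
  have jacobi := P.bracket_jacobi f g h
  rw [P.bracket_antisymm h f, P.bracket_neg_right, P.bracket_antisymm h (P.bracket f g)] at jacobi
  simp only [comm, ham]
  linear_combination jacobi

lemma isPoissonVF_modularVF (V : VolumeForm IM M) : IsPoissonVF P (P.modularVF V) := by
  intro f g
  have div_comm_ham := V.div_comm _ _ (P.isVectorField_ham f) (P.isVectorField_ham g)
  rw [P.comm_ham] at div_comm_ham
  simp only [modularVF]
  rw [div_comm_ham, ham, ham, P.bracket_antisymm g]
  abel

end PoissonStructure

section ClosedCochains

variable {PM : PoissonStructure IM M} {PN : PoissonStructure IN N} {φ : C^∞⟮IM, M; IN, N⟯}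

lemma IsClosedCochain.sub {Y Z : Cochain IM M IN N} (hY : IsClosedCochain PM PN φ Y)
    (hZ : IsClosedCochain PM PN φ Z) : IsClosedCochain PM PN φ (Y - Z) := by
  intro f g
  simp only [Pi.sub_apply, PM.bracket_sub_right]
  linear_combination hY f g - hZ f g

lemma isClosedCochain_pushSrc (hφ : IsPoissonMap PM PN φ) {X : C^∞⟮IM, M; ℝ⟯ → C^∞⟮IM, M; ℝ⟯}
    (hX : IsPoissonVF PM X) : IsClosedCochain PM PN φ (pushSrc φ X) := by
  intro f g
  simp only [pushSrc]
  rw [hφ, hX, PM.bracket_antisymm (pullback φ g)]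
  abel

lemma isClosedCochain_pushTgt (hφ : IsPoissonMap PM PN φ) {Y : C^∞⟮IN, N; ℝ⟯ → C^∞⟮IN, N; ℝ⟯}
    (hY : IsPoissonVF PN Y) : IsClosedCochain PM PN φ (pushTgt φ Y) := by
  intro f g
  simp only [pushTgt]
  rw [← hφ, ← hφ, hY, PN.bracket_antisymm g (Y f)]
  ext x
  simp only [pullback, ContMDiffMap.add_comp, ContMDiffMap.coe_sub, ContMDiffMap.coe_add,
    ContMDiffMap.coe_neg, ContMDiffMap.coe_zero, ContMDiffMap.comp_apply, Pi.sub_apply,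
    Pi.add_apply, Pi.neg_apply, Pi.zero_apply]
  ring

end ClosedCochains

/-- Let `φ : M → N` be a Poisson map between oriented Poisson manifolds and
fix volume forms `μ` on `M` and `ν` on `N`.  Then the modular class
`mod(φ) = i*mod(M) - j*mod(N) ∈ H¹_π(φ)` is represented by the vector field along `φ`
given by `X_{μ,ν} = dφ·X_μ - X_ν∘φ`, where `X_μ` and `X_ν` are the modular vector fields
of `π_M` and `π_N` relative to `μ` and `ν`: that is, `X_{μ,ν}` is a closed 1-cochain and
its class equals `i*[X_μ] - j*[X_ν]`. -/
theorem modular_class_of_Poisson_map_represented_by_modular_vector_field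
    {EM : Type*} [NormedAddCommGroup EM] [NormedSpace ℝ EM]
    {HM : Type*} [TopologicalSpace HM] {IM : ModelWithCorners ℝ EM HM}
    {M : Type*} [TopologicalSpace M] [ChartedSpace HM M]
    {EN : Type*} [NormedAddCommGroup EN] [NormedSpace ℝ EN]
    {HN : Type*} [TopologicalSpace HN] {IN : ModelWithCorners ℝ EN HN}
    {N : Type*} [TopologicalSpace N] [ChartedSpace HN N]
    (PM : PoissonStructure IM M) (PN : PoissonStructure IN N)
    (φ : C^∞⟮IM, M; IN, N⟯) (hφ : IsPoissonMap PM PN φ)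
    (Vμ : VolumeForm IM M) (Vν : VolumeForm IN N) :
    IsClosedCochain PM PN φ (modularCochain PM PN φ Vμ Vν) ∧
      cls PM φ (modularCochain PM PN φ Vμ Vν) =
        cls PM φ (pushSrc φ (PM.modularVF Vμ)) - cls PM φ (pushTgt φ (PN.modularVF Vν)) :=
  ⟨(isClosedCochain_pushSrc hφ (PM.isPoissonVF_modularVF Vμ)).sub
      (isClosedCochain_pushTgt hφ (PN.isPoissonVF_modularVF Vν)),
    Submodule.Quotient.mk_sub _⟩

end PoissonPaper
end
end

section
/- Let φ: M → N be a surjective Poisson submersion with fibration foliation F_φ. A section [X] ∈ Γ(ν(F_φ)) = X¹(φ) is a closed 1-cochain for the Lie algebroid ν*(F_φ) ≅ φ*T*N if and only if any vector field X representing it satisfies X({f∘φ, g∘φ}) = {X(f∘φ), g∘φ} + {f∘φ, X(g∘φ)} for all smooth f, g on N; and [X] is exact if and only if it is represented by a hamiltonian vector field of M. -/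
open scoped Manifold
local notation "∞" => (⊤ : ℕ∞)

noncomputable section

namespace PoissonPaper

variable {EM : Type*} [NormedAddCommGroup EM] [NormedSpace ℝ EM]
  {HM : Type*} [TopologicalSpace HM] {IM : ModelWithCorners ℝ EM HM}
  {M : Type*} [TopologicalSpace M] [ChartedSpace HM M]
  {EN : Type*} [NormedAddCommGroup EN] [NormedSpace ℝ EN]
  {HN : Type*} [TopologicalSpace HN] {IN : ModelWithCorners ℝ EN HN}
  {N : Type*} [TopologicalSpace N] [ChartedSpace HN N]

/-- Let `φ : M → N` be a surjective Poisson submersion, with fibration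
foliation `F_φ`.  A section `[X] ∈ Γ(ν(F_φ)) = X¹(φ)` (encoded by its action
`dφ·X = pushSrc φ X` on basic functions, for a representative vector field `X` on `M`)
is a closed 1-cochain of the Lie algebroid `ν*(F_φ) ≅ φ*T*N` if and only if any
representing vector field `X` satisfies
`X({f∘φ, g∘φ}) = {X(f∘φ), g∘φ} + {f∘φ, X(g∘φ)}` for all smooth `f, g` on `N`
(i.e. `X` is Poisson along basic functions); and it is exact if and only if it is
represented by a hamiltonian vector field of `M`. -/
theorem closed_and_exact_cochains_of_Poisson_submersion
    {EM : Type*} [NormedAddCommGroup EM] [NormedSpace ℝ EM]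
    {HM : Type*} [TopologicalSpace HM] {IM : ModelWithCorners ℝ EM HM}
    {M : Type*} [TopologicalSpace M] [ChartedSpace HM M]
    {EN : Type*} [NormedAddCommGroup EN] [NormedSpace ℝ EN]
    {HN : Type*} [TopologicalSpace HN] {IN : ModelWithCorners ℝ EN HN}
    {N : Type*} [TopologicalSpace N] [ChartedSpace HN N]
    (PM : PoissonStructure IM M) (PN : PoissonStructure IN N)
    (φ : C^∞⟮IM, M; IN, N⟯) (hφ : IsPoissonMap PM PN φ)
    (hsurj : Function.Surjective φ)
    (hsubm : ∀ x : M, Function.Surjective (mfderiv IM IN φ x))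
    (X : C^∞⟮IM, M; ℝ⟯ → C^∞⟮IM, M; ℝ⟯) (hX : IsVectorField IM M X) :
    (IsClosedCochain PM PN φ (pushSrc φ X) ↔
      ∀ f g, X (PM.bracket (pullback φ f) (pullback φ g)) =
        PM.bracket (X (pullback φ f)) (pullback φ g)
          + PM.bracket (pullback φ f) (X (pullback φ g))) ∧
    (pushSrc φ X ∈ exactSubmodule PM φ ↔
      ∃ h : C^∞⟮IM, M; ℝ⟯, pushSrc φ (PM.ham h) = pushSrc φ X) := by
  have hneg : ∀ f g : C^∞⟮IM, M; ℝ⟯, PM.bracket (-f) g = -PM.bracket f g := by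
    intro f g
    have := PM.bracket_smul_left (-1) f g
    simpa using this
  constructor
  · constructor
    · intro h f g
      have h1 := h f g
      simp only [pushSrc] at h1
      rw [hφ f g] at h1
      rw [PM.bracket_antisymm (X (pullback φ f)) (pullback φ g)]
      linear_combination (norm := abel) -h1
    · intro h f g
      have h1 := h f g
      unfold pushSrc
      rw [hφ f g, h1, PM.bracket_antisymm (X (pullback φ f)) (pullback φ g)]
      abel
  · constructor
    · rintro ⟨h, H⟩
      refine ⟨-h, ?_⟩
      funext g
      unfold pushSrc PoissonStructure.ham
      rw [hneg, PM.bracket_antisymm h (pullback φ g), neg_neg, ← H g]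
      rfl
    · rintro ⟨h, H⟩
      refine ⟨-h, ?_⟩
      intro g
      have := congrFun H g
      unfold pushSrc PoissonStructure.ham at this
      rw [PM.bracket_antisymm (pullback φ g) (-h), hneg, neg_neg, this]
      rfl

end PoissonPaper
end
end

section
/- Let φ: M → N be a surjective Poisson submersion. Then the space of projectable multivector fields X•_proj(M) (those A with dφ·(L_Y A) = 0 for all vertical vector fields Y) is a subcomplex of the Poisson complex (X•(M), d_π), i.e. d_π A = [π, A] is projectable whenever A is projectable. -/
open scoped Manifold
local notation "∞" => (⊤ : ℕ∞)

noncomputable section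

namespace PoissonPaper

variable {EM : Type*} [NormedAddCommGroup EM] [NormedSpace ℝ EM]
  {HM : Type*} [TopologicalSpace HM] {IM : ModelWithCorners ℝ EM HM}
  {M : Type*} [TopologicalSpace M] [ChartedSpace HM M]
  {EN : Type*} [NormedAddCommGroup EN] [NormedSpace ℝ EN]
  {HN : Type*} [TopologicalSpace HN] {IN : ModelWithCorners ℝ EN HN}
  {N : Type*} [TopologicalSpace N] [ChartedSpace HN N]

section Statement13

variable {EM : Type*} [NormedAddCommGroup EM] [NormedSpace ℝ EM]
  {HM : Type*} [TopologicalSpace HM] {IM : ModelWithCorners ℝ EM HM}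
  {M : Type*} [TopologicalSpace M] [ChartedSpace HM M]
  {EN : Type*} [NormedAddCommGroup EN] [NormedSpace ℝ EN]
  {HN : Type*} [TopologicalSpace HN] {IN : ModelWithCorners ℝ EN HN}
  {N : Type*} [TopologicalSpace N] [ChartedSpace HN N]

variable (IM M) in
/-- A `k`-multivector field on `M`, encoded as a `k`-multilinear operator on smooth
functions. -/
abbrev MultiVF (k : ℕ) : Type _ := (Fin k → C^∞⟮IM, M; ℝ⟯) → C^∞⟮IM, M; ℝ⟯

variable (IM M) in
/-- The defining properties of a `k`-multivector field: it is an alternating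
multiderivation of the ring of smooth functions. -/
def IsMultiVF {k : ℕ} (A : MultiVF IM M k) : Prop :=
  (∀ v (i : Fin k) f g, A (Function.update v i (f + g)) =
      A (Function.update v i f) + A (Function.update v i g)) ∧
  (∀ v (i : Fin k) (r : ℝ) f, A (Function.update v i (r • f)) =
      r • A (Function.update v i f)) ∧
  (∀ v (i : Fin k) f g, A (Function.update v i (f * g)) =
      f * A (Function.update v i g) + g * A (Function.update v i f)) ∧
  (∀ v (i j : Fin k), i ≠ j → v i = v j → A v = 0)

variable (IM M) in
/-- The Lie derivative `L_Y A = [Y, A]` of a multivector field `A` along a vector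
field `Y`. -/
def lieDerMV {k : ℕ} (Y : C^∞⟮IM, M; ℝ⟯ → C^∞⟮IM, M; ℝ⟯) (A : MultiVF IM M k) :
    MultiVF IM M k :=
  fun v => Y (A v) - ∑ i : Fin k, A (Function.update v i (Y (v i)))

/-- A vector field on `M` is vertical for `φ : M → N` when it kills basic functions. -/
def IsVerticalVF (φ : C^∞⟮IM, M; IN, N⟯) (Y : C^∞⟮IM, M; ℝ⟯ → C^∞⟮IM, M; ℝ⟯) : Prop :=
  ∀ f, Y (pullback φ f) = 0

/-- A `k`-multivector field `A` on `M` is projectable along `φ : M → N` when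
`dφ·(L_Y A) = 0` for every vertical vector field `Y`. -/
def IsProjectableMV (φ : C^∞⟮IM, M; IN, N⟯) {k : ℕ} (A : MultiVF IM M k) : Prop :=
  ∀ Y, IsVectorField IM M Y → IsVerticalVF φ Y →
    ∀ w : Fin k → C^∞⟮IN, N; ℝ⟯, lieDerMV IM M Y A (fun i => pullback φ (w i)) = 0

/-- The Lichnerowicz differential `d_π A = [π, A]` of a `(k+1)`-multivector field,
given by the standard formula
`(d_π A)(f₀,…,f_{k+1}) = ∑ᵢ (-1)ⁱ {fᵢ, A(f₀,…,f̂ᵢ,…)} +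
∑_{i<j} (-1)^{i+j} A({fᵢ,fⱼ}, f₀,…,f̂ᵢ,…,f̂ⱼ,…)`. -/
def dPi (P : PoissonStructure IM M) {k : ℕ} (A : MultiVF IM M (k + 1)) :
    MultiVF IM M (k + 2) :=
  fun v =>
    (∑ i : Fin (k + 2), ((-1 : ℝ) ^ (i : ℕ)) • P.bracket (v i) (A (v ∘ i.succAbove)))
      + ∑ i : Fin (k + 2), ∑ j : Fin (k + 1),
        if ((i : ℕ) < ((i.succAbove j : Fin (k + 2)) : ℕ)) then
          ((-1 : ℝ) ^ ((i : ℕ) + ((i.succAbove j : Fin (k + 2)) : ℕ))) •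
            A (Fin.cons (P.bracket (v i) (v (i.succAbove j)))
                (fun l : Fin k => v (i.succAbove (j.succAbove l))))
        else 0

lemma vf_zero (Y : C^∞⟮IM, M; ℝ⟯ → C^∞⟮IM, M; ℝ⟯) (hY : IsVectorField IM M Y) :
    Y 0 = 0 := by
  simpa using hY.2.1 0 0

lemma vf_sum (Y : C^∞⟮IM, M; ℝ⟯ → C^∞⟮IM, M; ℝ⟯) (hY : IsVectorField IM M Y)
    {ι : Type*} (s : Finset ι) (f : ι → C^∞⟮IM, M; ℝ⟯) :
    Y (∑ i ∈ s, f i) = ∑ i ∈ s, Y (f i) := by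
  classical
  induction s using Finset.induction_on with
  | empty => simpa using vf_zero Y hY
  | @insert a s ha ih => rw [Finset.sum_insert ha, Finset.sum_insert ha, hY.1, ih]

lemma ham_isVF (P : PoissonStructure IM M) (f : C^∞⟮IM, M; ℝ⟯) :
    IsVectorField IM M (P.bracket f) :=
  ⟨fun g h => P.bracket_add_right f g h, fun r g => P.bracket_smul_right r f g,
   fun g h => P.bracket_leibniz f g h⟩

lemma comm_isVF (X Y : C^∞⟮IM, M; ℝ⟯ → C^∞⟮IM, M; ℝ⟯)
    (hX : IsVectorField IM M X) (hY : IsVectorField IM M Y) :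
    IsVectorField IM M (comm IM M X Y) := by
  refine ⟨fun f g => ?_, fun r f => ?_, fun f g => ?_⟩
  · simp only [comm, hX.1, hY.1]; abel
  · simp only [comm, hX.2.1, hY.2.1, smul_sub]
  · simp only [comm, hX.2.2, hY.2.2, hX.1, hY.1]; ring

lemma comm_vertical (PM : PoissonStructure IM M) (PN : PoissonStructure IN N)
    (φ : C^∞⟮IM, M; IN, N⟯) (hφ : IsPoissonMap PM PN φ)
    (Y : C^∞⟮IM, M; ℝ⟯ → C^∞⟮IM, M; ℝ⟯) (hYv : IsVerticalVF φ Y)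
    (f : C^∞⟮IN, N; ℝ⟯) :
    IsVerticalVF φ (comm IM M Y (PM.bracket (pullback φ f))) := by
  intro g
  show Y (PM.bracket (pullback φ f) (pullback φ g))
      - PM.bracket (pullback φ f) (Y (pullback φ g)) = 0
  rw [← hφ f g, hYv, hYv, PM.bracket_zero_right, sub_zero]

lemma mvf_update_zero {k : ℕ} (A : MultiVF IM M k) (hA : IsMultiVF IM M A)
    (v : Fin k → C^∞⟮IM, M; ℝ⟯) (i : Fin k) :
    A (Function.update v i 0) = 0 := by
  simpa using hA.2.1 v i 0 0

lemma mvf_apply_zero {k : ℕ} (A : MultiVF IM M k) (hA : IsMultiVF IM M A)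
    (v : Fin k → C^∞⟮IM, M; ℝ⟯) (i : Fin k) (hv : v i = 0) : A v = 0 := by
  have h : v = Function.update v i 0 := by
    rw [← hv, Function.update_eq_self]
  rw [h, mvf_update_zero A hA]

lemma proj_apply {k : ℕ} (A : MultiVF IM M k) (hA : IsMultiVF IM M A)
    (φ : C^∞⟮IM, M; IN, N⟯) (hproj : IsProjectableMV φ A)
    (Y : C^∞⟮IM, M; ℝ⟯ → C^∞⟮IM, M; ℝ⟯) (hY : IsVectorField IM M Y)
    (hYv : IsVerticalVF φ Y) (w : Fin k → C^∞⟮IN, N; ℝ⟯) :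
    Y (A (fun i => pullback φ (w i))) = 0 := by
  have h := hproj Y hY hYv w
  simp only [lieDerMV, sub_eq_zero] at h
  rw [h]
  apply Finset.sum_eq_zero
  intro i _
  have h0 : Y ((fun i => pullback φ (w i)) i) = 0 := hYv (w i)
  rw [h0]
  exact mvf_update_zero A hA _ i

lemma dPi_update_zero (P : PoissonStructure IM M) {k : ℕ} (A : MultiVF IM M (k + 1))
    (hA : IsMultiVF IM M A) (v : Fin (k + 2) → C^∞⟮IM, M; ℝ⟯) (m : Fin (k + 2)) :
    dPi P A (Function.update v m 0) = 0 := by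
  classical
  set u := Function.update v m 0 with hu
  have hum : u m = 0 := Function.update_self m 0 v
  show (∑ i : Fin (k + 2), ((-1 : ℝ) ^ (i : ℕ)) • P.bracket (u i) (A (u ∘ i.succAbove)))
      + ∑ i : Fin (k + 2), ∑ j : Fin (k + 1),
        (if ((i : ℕ) < ((i.succAbove j : Fin (k + 2)) : ℕ)) then
          ((-1 : ℝ) ^ ((i : ℕ) + ((i.succAbove j : Fin (k + 2)) : ℕ))) •
            A (Fin.cons (P.bracket (u i) (u (i.succAbove j)))
                (fun l : Fin k => u (i.succAbove (j.succAbove l))))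
        else 0) = 0
  have hS1 : (∑ i : Fin (k + 2), ((-1 : ℝ) ^ (i : ℕ)) •
      P.bracket (u i) (A (u ∘ i.succAbove))) = 0 := by
    apply Finset.sum_eq_zero
    intro i _
    by_cases him : i = m
    · subst him
      rw [hum, P.bracket_zero_left, smul_zero]
    · obtain ⟨z, hz⟩ := Fin.exists_succAbove_eq (fun h => him h.symm : m ≠ i)
      have hA0 : A (u ∘ i.succAbove) = 0 := by
        apply mvf_apply_zero A hA _ z
        show u (i.succAbove z) = 0
        rw [hz, hum]
      rw [hA0, P.bracket_zero_right, smul_zero]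
  have hS2 : (∑ i : Fin (k + 2), ∑ j : Fin (k + 1),
      (if ((i : ℕ) < ((i.succAbove j : Fin (k + 2)) : ℕ)) then
        ((-1 : ℝ) ^ ((i : ℕ) + ((i.succAbove j : Fin (k + 2)) : ℕ))) •
          A (Fin.cons (P.bracket (u i) (u (i.succAbove j)))
              (fun l : Fin k => u (i.succAbove (j.succAbove l))))
      else 0)) = 0 := by
    apply Finset.sum_eq_zero
    intro i _
    apply Finset.sum_eq_zero
    intro j _
    split_ifs with hc
    · by_cases him : i = m
      · subst him
        rw [hum, P.bracket_zero_left]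
        rw [mvf_apply_zero A hA _ 0 (by rw [Fin.cons_zero]), smul_zero]
      · by_cases hjm : i.succAbove j = m
        · rw [hjm, hum, P.bracket_zero_right]
          rw [mvf_apply_zero A hA _ 0 (by rw [Fin.cons_zero]), smul_zero]
        · obtain ⟨z, hz⟩ := Fin.exists_succAbove_eq (fun h => him h.symm : m ≠ i)
          have hzj : z ≠ j := by
            intro h; exact hjm (by rw [← h, hz])
          obtain ⟨l, hl⟩ := Fin.exists_succAbove_eq hzj
          have : A (Fin.cons (P.bracket (u i) (u (i.succAbove j)))
              (fun l : Fin k => u (i.succAbove (j.succAbove l)))) = 0 := by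
            apply mvf_apply_zero A hA _ l.succ
            rw [Fin.cons_succ]
            show u (i.succAbove (j.succAbove l)) = 0
            rw [hl, hz, hum]
          rw [this, smul_zero]
    · rfl
  rw [hS1, hS2, add_zero]

/-- Let `φ : M → N` be a surjective Poisson submersion.  Then the
projectable multivector fields form a subcomplex of the Lichnerowicz complex
`(X•(M), d_π)`: the differential of a projectable function is projectable, and
`d_π A = [π, A]` is projectable whenever the multivector field `A` is projectable. -/
theorem projectable_multivector_fields_form_subcomplex
    (PM : PoissonStructure IM M) (PN : PoissonStructure IN N)
    (φ : C^∞⟮IM, M; IN, N⟯) (hφ : IsPoissonMap PM PN φ)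
    (hsurj : Function.Surjective φ)
    (hsubm : ∀ x : M, Function.Surjective (mfderiv IM IN φ x)) :
    (∀ h : C^∞⟮IM, M; ℝ⟯, (∀ Y, IsVectorField IM M Y → IsVerticalVF φ Y → Y h = 0) →
      IsProjectableMV φ (fun v : Fin 1 → C^∞⟮IM, M; ℝ⟯ => PM.bracket (v 0) h)) ∧
    (∀ (k : ℕ) (A : MultiVF IM M (k + 1)), IsMultiVF IM M A → IsProjectableMV φ A →
      IsProjectableMV φ (dPi PM A)) := by
  constructor
  · -- differentials of basic functions are projectable
    intro h hbasic Y hY hYv w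
    show Y (PM.bracket ((fun i => pullback φ (w i)) 0) h)
        - ∑ i : Fin 1, PM.bracket
            (Function.update (fun i => pullback φ (w i)) i
              (Y ((fun i => pullback φ (w i)) i)) 0) h = 0
    rw [Fin.sum_univ_one, Function.update_self]
    have h1 : Y ((fun i => pullback φ (w i)) (0 : Fin 1)) = 0 := hYv (w 0)
    rw [h1, PM.bracket_zero_left, sub_zero]
    set Z := comm IM M Y (PM.bracket (pullback φ (w 0))) with hZ
    have hZvf : IsVectorField IM M Z := comm_isVF _ _ hY (ham_isVF PM _)
    have hZv : IsVerticalVF φ Z := comm_vertical PM PN φ hφ Y hYv (w 0)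
    have hZh : Z h = 0 := hbasic Z hZvf hZv
    have hYh : Y h = 0 := hbasic Y hY hYv
    have hexp : Z h = Y (PM.bracket (pullback φ (w 0)) h)
        - PM.bracket (pullback φ (w 0)) (Y h) := rfl
    rw [hexp, hYh, PM.bracket_zero_right, sub_zero] at hZh
    exact hZh
  · -- d_π of a projectable multivector field is projectable
    intro k A hA hproj Y hY hYv w
    -- key fact 1 : Y ({f∘φ, A(pullbacks)}) = 0
    have key1 : ∀ (f : C^∞⟮IN, N; ℝ⟯) (w' : Fin (k + 1) → C^∞⟮IN, N; ℝ⟯),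
        Y (PM.bracket (pullback φ f) (A (fun j => pullback φ (w' j)))) = 0 := by
      intro f w'
      set Z := comm IM M Y (PM.bracket (pullback φ f)) with hZ
      have hZvf : IsVectorField IM M Z := comm_isVF _ _ hY (ham_isVF PM _)
      have hZv : IsVerticalVF φ Z := comm_vertical PM PN φ hφ Y hYv f
      have hZa : Z (A (fun j => pullback φ (w' j))) = 0 :=
        proj_apply A hA φ hproj Z hZvf hZv w'
      have hYa : Y (A (fun j => pullback φ (w' j))) = 0 :=
        proj_apply A hA φ hproj Y hY hYv w'
      have hexp : Z (A (fun j => pullback φ (w' j)))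
          = Y (PM.bracket (pullback φ f) (A (fun j => pullback φ (w' j))))
            - PM.bracket (pullback φ f) (Y (A (fun j => pullback φ (w' j)))) := rfl
      rw [hexp, hYa, PM.bracket_zero_right, sub_zero] at hZa
      exact hZa
    -- key fact 2 : Y (A ({f∘φ, g∘φ}, pullbacks)) = 0
    have key2 : ∀ (f g : C^∞⟮IN, N; ℝ⟯) (w' : Fin k → C^∞⟮IN, N; ℝ⟯),
        Y (A (Fin.cons (PM.bracket (pullback φ f) (pullback φ g))
            (fun l => pullback φ (w' l)))) = 0 := by
      intro f g w'
      have harg : (Fin.cons (PM.bracket (pullback φ f) (pullback φ g))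
            (fun l => pullback φ (w' l)) : Fin (k + 1) → C^∞⟮IM, M; ℝ⟯)
          = fun t => pullback φ ((Fin.cons (PN.bracket f g) w' : Fin (k + 1) → C^∞⟮IN, N; ℝ⟯) t) := by
        funext t
        refine Fin.cases ?_ (fun l => ?_) t
        · rw [Fin.cons_zero, Fin.cons_zero, ← hφ]
        · rw [Fin.cons_succ, Fin.cons_succ]
      rw [harg]
      exact proj_apply A hA φ hproj Y hY hYv _
    show Y (dPi PM A (fun i => pullback φ (w i)))
        - ∑ m : Fin (k + 2), dPi PM A
            (Function.update (fun i => pullback φ (w i)) m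
              (Y ((fun i => pullback φ (w i)) m))) = 0
    have hS : (∑ m : Fin (k + 2), dPi PM A
        (Function.update (fun i => pullback φ (w i)) m
          (Y ((fun i => pullback φ (w i)) m)))) = 0 := by
      apply Finset.sum_eq_zero
      intro m _
      have h1 : Y ((fun i => pullback φ (w i)) m) = 0 := hYv (w m)
      rw [h1]
      exact dPi_update_zero PM A hA _ m
    rw [hS, sub_zero]
    show Y ((∑ i : Fin (k + 2), ((-1 : ℝ) ^ (i : ℕ)) •
        PM.bracket ((fun i => pullback φ (w i)) i)
          (A ((fun i => pullback φ (w i)) ∘ i.succAbove)))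
      + ∑ i : Fin (k + 2), ∑ j : Fin (k + 1),
        (if ((i : ℕ) < ((i.succAbove j : Fin (k + 2)) : ℕ)) then
          ((-1 : ℝ) ^ ((i : ℕ) + ((i.succAbove j : Fin (k + 2)) : ℕ))) •
            A (Fin.cons (PM.bracket ((fun i => pullback φ (w i)) i)
                ((fun i => pullback φ (w i)) (i.succAbove j)))
              (fun l : Fin k => (fun i => pullback φ (w i)) (i.succAbove (j.succAbove l))))
        else 0)) = 0
    rw [hY.1, vf_sum Y hY, vf_sum Y hY]
    have hT1 : (∑ i : Fin (k + 2), Y (((-1 : ℝ) ^ (i : ℕ)) •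
        PM.bracket ((fun i => pullback φ (w i)) i)
          (A ((fun i => pullback φ (w i)) ∘ i.succAbove)))) = 0 := by
      apply Finset.sum_eq_zero
      intro i _
      rw [hY.2.1]
      have h0 : Y (PM.bracket ((fun i => pullback φ (w i)) i)
          (A ((fun i => pullback φ (w i)) ∘ i.succAbove))) = 0 :=
        key1 (w i) (w ∘ i.succAbove)
      rw [h0, smul_zero]
    have hT2 : (∑ i : Fin (k + 2), Y (∑ j : Fin (k + 1),
        (if ((i : ℕ) < ((i.succAbove j : Fin (k + 2)) : ℕ)) then
          ((-1 : ℝ) ^ ((i : ℕ) + ((i.succAbove j : Fin (k + 2)) : ℕ))) •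
            A (Fin.cons (PM.bracket ((fun i => pullback φ (w i)) i)
                ((fun i => pullback φ (w i)) (i.succAbove j)))
              (fun l : Fin k => (fun i => pullback φ (w i)) (i.succAbove (j.succAbove l))))
        else 0))) = 0 := by
      apply Finset.sum_eq_zero
      intro i _
      rw [vf_sum Y hY]
      apply Finset.sum_eq_zero
      intro j _
      split_ifs with hc
      · rw [hY.2.1]
        have h0 : Y (A (Fin.cons (PM.bracket ((fun i => pullback φ (w i)) i)
              ((fun i => pullback φ (w i)) (i.succAbove j)))
            (fun l : Fin k =>
              (fun i => pullback φ (w i)) (i.succAbove (j.succAbove l))))) = 0 :=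
          key2 (w i) (w (i.succAbove j)) (fun l => w (i.succAbove (j.succAbove l)))
        rw [h0, smul_zero]
      · exact vf_zero Y hY
    rw [hT1, hT2, add_zero]

end Statement13

end PoissonPaper
end
end
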